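/- Let Δ ⊆ ℝ⁴ be a reflexive polytope and let w₁, …, w₅ ∈ Δ ∩ ℤ⁴ satisfy w₁ + w₂ + w₃ + w₄ + w₅ ∈ 4·∂Δ. Then for all distinct indices i, j, k, ℓ ∈ {1, …, 5}, the sum wᵢ + wⱼ + w_k + w_ℓ lies in 3·∂Δ ∪ 4·∂Δ. -/

import Mathlib

open Pointwise

/-- The standard pairing `⟨m,n⟩ = ∑ i, mᵢ nᵢ` on `ℝ^d`. -/
def pairing {d : ℕ} (m n : Fin d → ℝ) : ℝ := ∑ i, m i * n i

/-- A point of `ℝ^d` is a lattice point if all coordinates are integers. -/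
def IsLatticePt {d : ℕ} (v : Fin d → ℝ) : Prop := ∀ i, ∃ n : ℤ, v i = (n : ℝ)

/-- The set of lattice points of `ℝ^d`. -/
def latticePts (d : ℕ) : Set (Fin d → ℝ) := {v | IsLatticePt v}

/-- A lattice polytope is the convex hull of finitely many lattice points. -/
def IsLatticePolytope {d : ℕ} (Δ : Set (Fin d → ℝ)) : Prop :=
  ∃ S : Finset (Fin d → ℝ), (S : Set (Fin d → ℝ)) ⊆ latticePts d ∧
    Δ = convexHull ℝ (S : Set (Fin d → ℝ))

/-- The dual polytope `Δ* = {m : ⟨m,n⟩ ≥ -1 for all n ∈ Δ}`. -/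
def dualPolytope {d : ℕ} (Δ : Set (Fin d → ℝ)) : Set (Fin d → ℝ) :=
  {m | ∀ n ∈ Δ, -1 ≤ pairing m n}

/-- A reflexive polytope: a lattice polytope with `0` in its interior
whose dual polytope is again a lattice polytope. -/
def IsReflexive {d : ℕ} (Δ : Set (Fin d → ℝ)) : Prop :=
  IsLatticePolytope Δ ∧ (0 : Fin d → ℝ) ∈ interior Δ ∧ IsLatticePolytope (dualPolytope Δ)

/-- `Cone(v₁,…,v_k) = {r₁v₁ + ⋯ + r_kv_k : rᵢ ≥ 0}`. -/
def coneOf {d k : ℕ} (v : Fin k → (Fin d → ℝ)) : Set (Fin d → ℝ) :=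
  {x | ∃ r : Fin k → ℝ, (∀ i, 0 ≤ r i) ∧ x = ∑ i, r i • v i}

/-- `r·∂Δ`, the frontier (topological boundary) of the dilate `rΔ`. -/
def bdry {d : ℕ} (r : ℝ) (Δ : Set (Fin d → ℝ)) : Set (Fin d → ℝ) := frontier (r • Δ)

/-- The points of `S` lie in a common proper face of `Δ`: there is `u` with
`⟨u,x⟩ ≤ 1` on `Δ` and `⟨u,v⟩ = 1` for all `v ∈ S`. -/
def InCommonFace {d : ℕ} (Δ : Set (Fin d → ℝ)) (S : Set (Fin d → ℝ)) : Prop :=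
  ∃ u : Fin d → ℝ, (∀ x ∈ Δ, pairing u x ≤ 1) ∧ ∀ v ∈ S, pairing u v = 1

/-- Coordinatewise cast of an integer vector to a real vector. -/
def toRealVec {d : ℕ} (n : Fin d → ℤ) : Fin d → ℝ := fun i => (n i : ℝ)

/-! Since `w₁ + ⋯ + w₅` lies on `4·∂Δ`, some `m ∈ Δ*` has `⟨m, w₁ + ⋯ + w₅⟩ ≤ -4`; as
`⟨m, wₐ⟩ ≥ -1`, dropping one `wₐ` leaves a lattice point `x ∈ 4Δ` with `⟨m, x⟩ ≤ -3`.
If `x` is not on `4·∂Δ` it is interior to `4Δ`, so its pairings with the lattice generators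
of `Δ*` are integers `> -4`, hence `≥ -3`: thus `x ∈ 3Δ`, and `⟨m, x⟩ ≤ -3` puts it on `3·∂Δ`. -/

open Filter Topology

section Dual

variable {d : ℕ}

theorem pairing_eq_dotProduct (m x : Fin d → ℝ) : pairing m x = m ⬝ᵥ x := rfl

theorem pairing_add_right (m x y : Fin d → ℝ) : pairing m (x + y) = pairing m x + pairing m y :=
  dotProduct_add m x y

theorem pairing_smul_right (m : Fin d → ℝ) (c : ℝ) (x : Fin d → ℝ) :
    pairing m (c • x) = c * pairing m x :=
  dotProduct_smul c m x

theorem continuous_pairing_right (m : Fin d → ℝ) : Continuous (pairing m) :=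
  continuous_const.dotProduct continuous_id

theorem isLinearMap_pairing_left (x : Fin d → ℝ) : IsLinearMap ℝ fun m : Fin d → ℝ ↦ pairing m x :=
  ⟨fun m m' ↦ add_dotProduct m m' x, fun c m ↦ smul_dotProduct c m x⟩

variable {Δ : Set (Fin d → ℝ)}

theorem neg_le_pairing_of_mem_smul {r : ℝ} (hr : 0 ≤ r) {m y : Fin d → ℝ}
    (hm : m ∈ dualPolytope Δ) (hy : y ∈ r • Δ) : -r ≤ pairing m y := by
  obtain ⟨z, hz, rfl⟩ := hy
  rw [pairing_smul_right]
  nlinarith [hm z hz]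

theorem mem_of_forall_mem_dualPolytope (hconv : Convex ℝ Δ) (hclosed : IsClosed Δ)
    (h0 : 0 ∈ Δ) {x : Fin d → ℝ} (hx : ∀ m ∈ dualPolytope Δ, -1 ≤ pairing m x) : x ∈ Δ := by
  by_contra hxΔ
  obtain ⟨f, u, hfΔ, hfx⟩ := geometric_hahn_banach_closed_point hconv hclosed hxΔ
  have hu : 0 < u := by simpa using hfΔ 0 h0
  set v := (dotProductEquiv ℝ (Fin d)).symm f.toLinearMap
  have hv : ∀ y, pairing (-u⁻¹ • v) y = -(f y / u) := fun y ↦ by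
    have hfv : v ⬝ᵥ y = f y :=
      LinearMap.congr_fun ((dotProductEquiv ℝ (Fin d)).apply_symm_apply f.toLinearMap) y
    rw [pairing_eq_dotProduct, smul_dotProduct, hfv, smul_eq_mul]
    ring
  have hdual : -u⁻¹ • v ∈ dualPolytope Δ := fun y hy ↦ by
    rw [hv, neg_le_neg_iff]
    exact (div_le_one hu).2 (hfΔ y hy).le
  have := hx _ hdual
  rw [hv, neg_le_neg_iff] at this
  exact (one_lt_div hu).2 hfx |>.not_ge this

theorem mem_smul_of_forall_mem_dualPolytope (hconv : Convex ℝ Δ) (hclosed : IsClosed Δ)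
    (h0 : 0 ∈ Δ) {r : ℝ} (hr : 0 < r) {x : Fin d → ℝ}
    (hx : ∀ m ∈ dualPolytope Δ, -r ≤ pairing m x) : x ∈ r • Δ := by
  have : r⁻¹ • x ∈ Δ := mem_of_forall_mem_dualPolytope hconv hclosed h0 fun m hm ↦ by
    rw [pairing_smul_right]
    calc -1 = r⁻¹ * -r := by field_simp
      _ ≤ r⁻¹ * pairing m x := by gcongr; exact hx m hm
  simpa [smul_inv_smul₀ hr.ne'] using Set.smul_mem_smul_set (a := r) this

theorem forall_mem_dualPolytope_of_forall_mem_generators {S' : Finset (Fin d → ℝ)}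
    (hS' : dualPolytope Δ = convexHull ℝ (S' : Set (Fin d → ℝ))) {c : ℝ} {x : Fin d → ℝ}
    (hx : ∀ m ∈ S', c ≤ pairing m x) : ∀ m ∈ dualPolytope Δ, c ≤ pairing m x := by
  rw [hS']
  exact convexHull_min hx (convex_halfSpace_ge (isLinearMap_pairing_left x) c)

theorem mem_interior_smul_of_forall_mem_generators (hconv : Convex ℝ Δ) (hclosed : IsClosed Δ)
    (h0 : 0 ∈ Δ) {S' : Finset (Fin d → ℝ)}
    (hS' : dualPolytope Δ = convexHull ℝ (S' : Set (Fin d → ℝ))) {r : ℝ} (hr : 0 < r)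
    {x : Fin d → ℝ} (hx : ∀ m ∈ S', -r < pairing m x) : x ∈ interior (r • Δ) := by
  have hopen : IsOpen {y | ∀ m ∈ S', -r < pairing m y} := by
    simp only [Set.ofPred_forall]
    exact isOpen_biInter_finset fun m _ ↦ isOpen_lt continuous_const (continuous_pairing_right m)
  refine interior_maximal (fun y hy ↦ ?_) hopen hx
  exact mem_smul_of_forall_mem_dualPolytope hconv hclosed h0 hr
    (forall_mem_dualPolytope_of_forall_mem_generators hS' fun m hm ↦ (hy m hm).le)

/-- Pushing `x` slightly outwards along the ray through it would make `⟨m, ·⟩` drop below `-r`. -/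
theorem notMem_interior_smul_of_pairing_le {r : ℝ} (hr : 0 < r) {m x : Fin d → ℝ}
    (hm : m ∈ dualPolytope Δ) (hx : pairing m x ≤ -r) : x ∉ interior (r • Δ) := by
  intro hint
  have hray : Tendsto (fun t : ℝ ↦ t • x) (𝓝 1) (𝓝 x) := by
    simpa using (tendsto_id (x := 𝓝 (1 : ℝ))).smul_const x
  have hnear : ∀ᶠ t in 𝓝[>] (1 : ℝ), t • x ∈ r • Δ :=
    nhdsWithin_le_nhds (hray (mem_interior_iff_mem_nhds.1 hint))
  obtain ⟨t, htx, ht⟩ := (hnear.and self_mem_nhdsWithin).exists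
  have := neg_le_pairing_of_mem_smul hr.le hm htx
  rw [pairing_smul_right] at this
  nlinarith [show (1 : ℝ) < t from ht]

theorem mem_frontier_smul_of_pairing_le {r : ℝ} (hr : 0 < r) {m x : Fin d → ℝ}
    (hm : m ∈ dualPolytope Δ) (hxΔ : x ∈ r • Δ) (hx : pairing m x ≤ -r) :
    x ∈ frontier (r • Δ) :=
  ⟨subset_closure hxΔ, notMem_interior_smul_of_pairing_le hr hm hx⟩

end Dual

theorem Convex.sum_mem_card_smul {E ι : Type*} [AddCommGroup E] [Module ℝ E] {Δ : Set E}
    (hconv : Convex ℝ Δ) (hne : Δ.Nonempty) (s : Finset ι) (w : ι → E)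
    (hw : ∀ i ∈ s, w i ∈ Δ) : ∑ i ∈ s, w i ∈ (s.card : ℝ) • Δ := by
  classical
  induction s using Finset.induction_on with
  | empty => simp [Set.zero_smul_set hne]
  | insert a s ha ih =>
    rw [Finset.sum_insert ha, Finset.card_insert_of_notMem ha, Nat.cast_succ, add_comm,
      hconv.add_smul zero_le_one (Nat.cast_nonneg _), one_smul]
    exact Set.add_mem_add (hw a (s.mem_insert_self a))
      (ih fun i hi ↦ hw i (Finset.mem_insert_of_mem hi))

section Lattice

variable {d : ℕ}

theorem IsLatticePt.add {x y : Fin d → ℝ} (hx : IsLatticePt x) (hy : IsLatticePt y) :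
    IsLatticePt (x + y) := fun i ↦ by
  obtain ⟨a, ha⟩ := hx i
  obtain ⟨b, hb⟩ := hy i
  exact ⟨a + b, by simp [ha, hb]⟩

theorem IsLatticePt.exists_pairing_eq_intCast {m x : Fin d → ℝ} (hm : IsLatticePt m)
    (hx : IsLatticePt x) : ∃ k : ℤ, pairing m x = k := by
  choose a ha using hm
  choose b hb using hx
  exact ⟨∑ i, a i * b i, by simp [pairing, ha, hb]⟩

theorem IsLatticePolytope.isCompact {Δ : Set (Fin d → ℝ)} (hΔ : IsLatticePolytope Δ) :
    IsCompact Δ := by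
  obtain ⟨S, -, rfl⟩ := hΔ
  exact S.finite_toSet.isCompact_convexHull (𝕜 := ℝ)

theorem IsLatticePolytope.convex {Δ : Set (Fin d → ℝ)} (hΔ : IsLatticePolytope Δ) :
    Convex ℝ Δ := by
  obtain ⟨S, -, rfl⟩ := hΔ
  exact convex_convexHull ℝ _

variable {Δ : Set (Fin d → ℝ)}

theorem IsReflexive.exists_pairing_le_of_mem_frontier_smul (hΔ : IsReflexive Δ) {r : ℝ}
    (hr : 0 < r) {x : Fin d → ℝ} (hx : x ∈ frontier (r • Δ)) :
    ∃ m ∈ dualPolytope Δ, pairing m x ≤ -r := by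
  obtain ⟨hP, h0, S', -, hS'⟩ := hΔ
  by_contra! h
  exact hx.2 <| mem_interior_smul_of_forall_mem_generators hP.convex hP.isCompact.isClosed
    (interior_subset h0) hS' hr fun m hm ↦ h m (hS' ▸ subset_convexHull ℝ _ hm)

theorem IsReflexive.mem_smul_of_mem_interior_add_one_smul (hΔ : IsReflexive Δ) {n : ℕ}
    (hn : 0 < n) {x : Fin d → ℝ} (hx : IsLatticePt x)
    (hint : x ∈ interior (((n : ℝ) + 1) • Δ)) : x ∈ (n : ℝ) • Δ := by
  obtain ⟨hP, h0, S', hS'L, hS'⟩ := hΔ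
  refine mem_smul_of_forall_mem_dualPolytope hP.convex hP.isCompact.isClosed
    (interior_subset h0) (by positivity)
    (forall_mem_dualPolytope_of_forall_mem_generators hS' fun m hm ↦ ?_)
  obtain ⟨k, hk⟩ := (hS'L hm).exists_pairing_eq_intCast hx
  have hlt : -((n : ℝ) + 1) < pairing m x := lt_of_not_ge fun hle ↦
    notMem_interior_smul_of_pairing_le (by positivity) (hS' ▸ subset_convexHull ℝ _ hm) hle hint
  rw [hk] at hlt ⊢
  have : -(n : ℤ) - 1 < k := by exact_mod_cast (by push_cast; linarith : ((-(n : ℤ) - 1 : ℤ) : ℝ) < k)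
  exact_mod_cast (by omega : -(n : ℤ) ≤ k)

theorem IsReflexive.mem_frontier_smul_or_mem_frontier_add_one_smul (hΔ : IsReflexive Δ)
    {n : ℕ} (hn : 0 < n) {m x : Fin d → ℝ} (hx : IsLatticePt x)
    (hxΔ : x ∈ ((n : ℝ) + 1) • Δ) (hm : m ∈ dualPolytope Δ) (hmx : pairing m x ≤ -n) :
    x ∈ frontier ((n : ℝ) • Δ) ∨ x ∈ frontier (((n : ℝ) + 1) • Δ) := by
  by_cases hint : x ∈ interior (((n : ℝ) + 1) • Δ)
  · exact .inl <| mem_frontier_smul_of_pairing_le (by positivity) hm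
      (hΔ.mem_smul_of_mem_interior_add_one_smul hn hx hint) hmx
  · exact .inr ⟨subset_closure hxΔ, hint⟩

end Lattice

/-- If `w₁,…,w₅` are lattice points of a reflexive 4-polytope `Δ`
with `w₁+⋯+w₅ ∈ 4·∂Δ`, then every sum of four distinct `wᵢ`'s lies in `3·∂Δ ∪ 4·∂Δ`. -/
theorem four_sums_good_of_five_sum_in_four_boundary
    (Δ : Set (Fin 4 → ℝ)) (hΔ : IsReflexive Δ)
    (w : Fin 5 → (Fin 4 → ℝ))
    (hwΔ : ∀ i, w i ∈ Δ) (hwL : ∀ i, IsLatticePt (w i))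
    (hsum : (∑ i, w i) ∈ bdry 4 Δ) :
    ∀ i j k l : Fin 5, i ≠ j → i ≠ k → i ≠ l → j ≠ k → j ≠ l → k ≠ l →
      w i + w j + w k + w l ∈ bdry 3 Δ ∪ bdry 4 Δ := by
  intro i j k l hij hik hil hjk hjl hkl
  obtain ⟨m, hm, hm_sum⟩ := hΔ.exists_pairing_le_of_mem_frontier_smul (by norm_num) hsum
  set s : Finset (Fin 5) := {i, j, k, l}
  have hs : ∑ b ∈ s, w b = w i + w j + w k + w l := by
    simp [s, Finset.sum_insert, hij, hik, hil, hjk, hjl, hkl, add_assoc]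
  have hcard : s.card = 4 := by
    simp [s, Finset.card_insert_of_notMem, hij, hik, hil, hjk, hjl, hkl]
  obtain ⟨a, ha⟩ := Finset.card_eq_one.1 (show sᶜ.card = 1 by rw [Finset.card_compl, hcard]; rfl)
  have hsplit : ∑ b, w b = w i + w j + w k + w l + w a := by
    rw [← Finset.sum_add_sum_compl s, ha, hs, Finset.sum_singleton]
  have hmem : w i + w j + w k + w l ∈ ((3 : ℕ) + 1 : ℝ) • Δ := by
    have := hΔ.1.convex.sum_mem_card_smul ⟨0, interior_subset hΔ.2.1⟩ s w fun b _ ↦ hwΔ b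
    rw [hs, hcard] at this
    norm_num at this ⊢
    exact this
  have hle : pairing m (w i + w j + w k + w l) ≤ -(3 : ℕ) := by
    rw [hsplit, pairing_add_right] at hm_sum
    push_cast
    linarith [hm _ (hwΔ a)]
  simpa [bdry, show (3 : ℝ) + 1 = 4 by norm_num] using hΔ.mem_frontier_smul_or_mem_frontier_add_one_smul three_pos
    ((((hwL i).add (hwL j)).add (hwL k)).add (hwL l)) hmem hm hle
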